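/- For the Farey map F and the operator F̂ defined on functions by (F̂f)(x) = (f(x/(1+x)) + x·f(1/(1+x)))/(1+x), and for every f ∈ L¹(μ) and every Borel set B ⊆ [0,1], one has ∫_B (F̂f) dμ = ∫_{F⁻¹(B)} f dμ, where dμ = dx/x. -/

import Mathlib

/-!
The Farey map has the two inverse branches `y ↦ y / (1 + y)` and `y ↦ 1 / (1 + y)`, which map
`[0, 1]` onto `[0, 1/2]` and `[1/2, 1]` with `|φ'(y)| = (1 + y)⁻²`. Hence `F⁻¹(B) ∩ [0, 1]` is the
union of the two images of `B`, which overlap at most in `1/2`. Changing variables along each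
branch turns `∫_{F⁻¹ B} f(x) dx / x` into `∫_B ∑_φ |φ'(y)| f(φ y) / φ y dy`, and the integrand
is exactly `(F̂ f)(y) / y`.
-/

open MeasureTheory

noncomputable def farey (x : ℝ) : ℝ := if x ≤ 1/2 then x / (1 - x) else (1 - x) / x

noncomputable def fareyMeasure : Measure ℝ :=
  (volume.restrict (Set.Icc (0:ℝ) 1)).withDensity (fun x => ENNReal.ofReal (1 / x))

noncomputable def fareyHat (f : ℝ → ℝ) (x : ℝ) : ℝ :=
  (f (x / (1 + x)) + x * f (1 / (1 + x))) / (1 + x)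

open Set

theorem Set.InvOn.image_eq_inter_preimage {α β : Type*} {f : α → β} {g : β → α} {s : Set β}
    {t : Set α} {B : Set β} (h : InvOn f g s t) (hg : MapsTo g s t) (hB : B ⊆ s) :
    g '' B = t ∩ f ⁻¹' B := by
  ext x
  constructor
  · rintro ⟨y, hy, rfl⟩
    exact ⟨hg (hB hy), by rwa [mem_preimage, h.1 (hB hy)]⟩
  · rintro ⟨hxt, hxB⟩
    exact ⟨f x, hxB, h.2 hxt⟩

lemma measurable_farey : Measurable farey :=
  Measurable.ite (measurableSet_le measurable_id measurable_const)
    (measurable_id.div (measurable_const.sub measurable_id))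
    ((measurable_const.sub measurable_id).div measurable_id)

noncomputable def fareyInv₀ (y : ℝ) : ℝ := y / (1 + y)

noncomputable def fareyInv₁ (y : ℝ) : ℝ := 1 / (1 + y)

lemma mapsTo_fareyInv₀ : MapsTo fareyInv₀ (Icc 0 1) (Icc 0 (1/2)) := by
  rintro y ⟨hy0, hy1⟩
  unfold fareyInv₀
  constructor
  · positivity
  · rw [div_le_iff₀ (by linarith)]
    linarith

lemma mapsTo_fareyInv₁ : MapsTo fareyInv₁ (Icc 0 1) (Icc (1/2) 1) := by
  rintro y ⟨hy0, hy1⟩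
  unfold fareyInv₁
  constructor
  · rw [le_div_iff₀ (by linarith)]
    linarith
  · rw [div_le_one (by linarith)]
    linarith

lemma invOn_fareyInv₀ : InvOn farey fareyInv₀ (Icc 0 1) (Icc 0 (1/2)) := by
  constructor
  · intro y hy
    have h1y : 1 + y ≠ 0 := by linarith [hy.1]
    rw [farey, if_pos (mapsTo_fareyInv₀ hy).2, fareyInv₀]
    field_simp
    ring
  · rintro x ⟨-, hx⟩
    have h1x : 1 - x ≠ 0 := by linarith
    rw [farey, if_pos hx, fareyInv₀]
    field_simp
    ring

-- At `1/2` the Farey map takes its first branch, which agrees with the second: `farey (1/2) = 1`.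
lemma invOn_fareyInv₁ : InvOn farey fareyInv₁ (Icc 0 1) (Icc (1/2) 1) := by
  constructor
  · rintro y ⟨hy0, hy1⟩
    rcases hy1.eq_or_lt with rfl | hy1
    · norm_num [farey, fareyInv₁]
    · have hlt : ¬ fareyInv₁ y ≤ 1/2 := by
        rw [fareyInv₁, not_le, lt_div_iff₀ (by linarith)]
        linarith
      have h1y : 1 + y ≠ 0 := by linarith
      rw [farey, if_neg hlt, fareyInv₁]
      field_simp
      ring
  · rintro x ⟨hx0, -⟩
    rcases hx0.eq_or_lt with rfl | hx0
    · norm_num [farey, fareyInv₁]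
    · have hx : x ≠ 0 := by linarith
      rw [farey, if_neg (not_le.2 hx0), fareyInv₁]
      field_simp
      ring

lemma hasDerivAt_fareyInv₀ {y : ℝ} (hy : 1 + y ≠ 0) :
    HasDerivAt fareyInv₀ (1 / (1 + y) ^ 2) y :=
  ((hasDerivAt_id' y).div ((hasDerivAt_id' y).const_add 1) hy).congr_deriv (by ring)

lemma hasDerivAt_fareyInv₁ {y : ℝ} (hy : 1 + y ≠ 0) :
    HasDerivAt fareyInv₁ (-(1 / (1 + y) ^ 2)) y :=
  ((hasDerivAt_const y (1 : ℝ)).div ((hasDerivAt_id' y).const_add 1) hy).congr_deriv (by ring)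

lemma image_fareyInv₀ {B : Set ℝ} (hB1 : B ⊆ Icc 0 1) :
    fareyInv₀ '' B = Icc 0 (1/2) ∩ farey ⁻¹' B :=
  invOn_fareyInv₀.image_eq_inter_preimage mapsTo_fareyInv₀ hB1

lemma image_fareyInv₁ {B : Set ℝ} (hB1 : B ⊆ Icc 0 1) :
    fareyInv₁ '' B = Icc (1/2) 1 ∩ farey ⁻¹' B :=
  invOn_fareyInv₁.image_eq_inter_preimage mapsTo_fareyInv₁ hB1

lemma farey_preimage_inter_Icc {B : Set ℝ} (hB1 : B ⊆ Icc 0 1) :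
    farey ⁻¹' B ∩ Icc 0 1 = fareyInv₀ '' B ∪ fareyInv₁ '' B := by
  rw [image_fareyInv₀ hB1, image_fareyInv₁ hB1, ← union_inter_distrib_right,
    Icc_union_Icc_eq_Icc (by norm_num) (by norm_num), inter_comm]

lemma aedisjoint_image_fareyInv {B : Set ℝ} (hB1 : B ⊆ Icc 0 1) :
    AEDisjoint volume (fareyInv₀ '' B) (fareyInv₁ '' B) := by
  refine measure_mono_null (fun x ⟨hx₀, hx₁⟩ => ?_) (Real.volume_singleton (a := 1/2))
  rw [image_fareyInv₀ hB1] at hx₀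
  rw [image_fareyInv₁ hB1] at hx₁
  exact le_antisymm hx₀.1.2 hx₁.1.1

lemma measurableSet_image_fareyInv₁ {B : Set ℝ} (hB : MeasurableSet B) (hB1 : B ⊆ Icc 0 1) :
    MeasurableSet (fareyInv₁ '' B) :=
  image_fareyInv₁ hB1 ▸ measurableSet_Icc.inter (measurable_farey hB)

lemma setIntegral_fareyMeasure {s : Set ℝ} (hs : MeasurableSet s) (g : ℝ → ℝ) :
    ∫ x in s, g x ∂fareyMeasure = ∫ x in s ∩ Icc 0 1, g x / x := by
  rw [fareyMeasure, setIntegral_withDensity_eq_setIntegral_toReal_smul (by fun_prop)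
      (ae_of_all _ fun _ => ENNReal.ofReal_lt_top) g hs, Measure.restrict_restrict hs]
  refine setIntegral_congr_fun (hs.inter measurableSet_Icc) fun x hx => ?_
  rw [ENNReal.toReal_ofReal (one_div_nonneg.2 hx.2.1), smul_eq_mul, one_div_mul_eq_div]

lemma integrableOn_div_of_integrable_fareyMeasure {f : ℝ → ℝ}
    (hf : Integrable f fareyMeasure) : IntegrableOn (fun x => f x / x) (Icc 0 1) := by
  have h := (integrable_withDensity_iff (by fun_prop)
    (ae_of_all _ fun _ => ENNReal.ofReal_lt_top)).1 hf
  refine IntegrableOn.congr_fun h (fun x hx => ?_) measurableSet_Icc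
  rw [ENNReal.toReal_ofReal (one_div_nonneg.2 hx.1), mul_one_div]

lemma fareyHat_div_self_eq (f : ℝ → ℝ) {y : ℝ} (hy : 0 < y) :
    fareyHat f y / y = |1 / (1 + y) ^ 2| • (f (fareyInv₀ y) / fareyInv₀ y)
      + |-(1 / (1 + y) ^ 2)| • (f (fareyInv₁ y) / fareyInv₁ y) := by
  rw [abs_neg, abs_of_pos (by positivity), fareyHat, fareyInv₀, fareyInv₁, smul_eq_mul,
    smul_eq_mul]
  field_simp

theorem transfer_operator_duality (f : ℝ → ℝ) (hf : Integrable f fareyMeasure)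
    (B : Set ℝ) (hB : MeasurableSet B) (hB1 : B ⊆ Set.Icc (0:ℝ) 1) :
    ∫ x in B, fareyHat f x ∂fareyMeasure = ∫ x in farey ⁻¹' B, f x ∂fareyMeasure := by
  have hg := integrableOn_div_of_integrable_fareyMeasure hf
  have h1y : ∀ y ∈ B, 1 + y ≠ 0 := fun y hy => by linarith [(hB1 hy).1]
  have hd₀ := fun y hy => (hasDerivAt_fareyInv₀ (h1y y hy)).hasDerivWithinAt (s := B)
  have hd₁ := fun y hy => (hasDerivAt_fareyInv₁ (h1y y hy)).hasDerivWithinAt (s := B)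
  have hinj₀ := invOn_fareyInv₀.1.injOn.mono hB1
  have hinj₁ := invOn_fareyInv₁.1.injOn.mono hB1
  have hsub : fareyInv₀ '' B ∪ fareyInv₁ '' B ⊆ Icc 0 1 :=
    farey_preimage_inter_Icc hB1 ▸ inter_subset_right
  have hg₀ := hg.mono_set (subset_union_left.trans hsub)
  have hg₁ := hg.mono_set (subset_union_right.trans hsub)
  rw [setIntegral_fareyMeasure hB, setIntegral_fareyMeasure (measurable_farey hB),
    inter_eq_left.2 hB1, farey_preimage_inter_Icc hB1,
    setIntegral_union₀ (aedisjoint_image_fareyInv hB1)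
      (measurableSet_image_fareyInv₁ hB hB1).nullMeasurableSet hg₀ hg₁,
    integral_image_eq_integral_abs_deriv_smul hB hd₀ hinj₀,
    integral_image_eq_integral_abs_deriv_smul hB hd₁ hinj₁,
    ← integral_add ((integrableOn_image_iff_integrableOn_abs_deriv_smul hB hd₀ hinj₀ _).1 hg₀)
      ((integrableOn_image_iff_integrableOn_abs_deriv_smul hB hd₁ hinj₁ _).1 hg₁)]
  refine setIntegral_congr_ae hB ?_
  filter_upwards [Measure.ae_ne volume 0] with y hy0 hyB
  exact fareyHat_div_self_eq f ((hB1 hyB).1.lt_of_ne' hy0)
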